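/- Let ε > 0 and λ ∈ ℝ satisfy ε ∫_0^m exp(−∫_0^s (λ+γ'+μ)/γ) ∫_0^s (1/γ(y)) exp(∫_0^y (λ+γ'+μ)/γ) dy ds = 1. Then the function u(s) = ε · exp(−∫_0^s (λ+γ'(σ)+μ(σ))/γ(σ) dσ) · ∫_0^s (1/γ(y)) exp(∫_0^y (λ+γ'(σ)+μ(σ))/γ(σ) dσ) dy is continuously differentiable, nonnegative, not identically zero, satisfies u(0) = 0, ∫_0^m u(s) ds = 1, and −(γu)'(s) − μ(s)u(s) + ε∫_0^m u(y) dy = λu(s) for all s ∈ [0,m]; i.e., λ is an eigenvalue of the operator u ↦ −(γu)' − μu + ε∫_0^m u with positive eigenfunction u. -/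

import Mathlib

open Set MeasureTheory intervalIntegral

/-!
The formula for `u` is the variation-of-constants solution of the linear equation
`γ u' = -(λ + γ' + μ) u + ε` with `u 0 = 0`: with `F = ∫₀ˢ (λ + γ' + μ) / γ` as integrating factor,
`(exp F · u)' = ε exp F / γ`. Rearranged, this equation is the eigenvalue equation as soon as
`∫₀ᵐ u = 1`, which is exactly the characteristic equation for `λ`. Nonnegativity is read off
the formula, and the normalisation rules out `u ≡ 0`.
-/

theorem ContinuousOn.hasDerivWithinAt_integral_Icc {E : Type*} [NormedAddCommGroup E]
    [NormedSpace ℝ E] [CompleteSpace E] {f : ℝ → E} {a b s : ℝ}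
    (hf : ContinuousOn f (Icc a b)) (hs : s ∈ Icc a b) :
    HasDerivWithinAt (fun t => ∫ x in a..t, f x) (f s) (Icc a b) s := by
  have : Fact (s ∈ Icc a b) := ⟨hs⟩
  exact integral_hasDerivWithinAt_right
    ((hf.mono (Icc_subset_Icc_right hs.2)).intervalIntegrable_of_Icc hs.1)
    (hf.stronglyMeasurableAtFilter_nhdsWithin measurableSet_Icc s) (hf s hs)

theorem hasDerivWithinAt_exp_neg_mul_integral_mul_exp {f F g : ℝ → ℝ} {a b s : ℝ}
    (hF : ∀ t ∈ Icc a b, HasDerivWithinAt F (f t) (Icc a b) t)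
    (hg : ContinuousOn g (Icc a b)) (hs : s ∈ Icc a b) :
    HasDerivWithinAt (fun t => Real.exp (-F t) * ∫ y in a..t, g y * Real.exp (F y))
      (-f s * (Real.exp (-F s) * ∫ y in a..s, g y * Real.exp (F y)) + g s) (Icc a b) s := by
  have hFc : ContinuousOn F (Icc a b) := fun t ht => (hF t ht).continuousWithinAt
  have hG := ContinuousOn.hasDerivWithinAt_integral_Icc
    (f := fun y => g y * Real.exp (F y)) (hg.mul hFc.rexp) hs
  refine (((hF s hs).neg.exp).mul hG).congr_deriv ?_
  simp only [Pi.neg_apply, Real.exp_neg]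
  field_simp

theorem exists_mem_uIcc_ne_zero_of_intervalIntegral_ne_zero {f : ℝ → ℝ} {a b : ℝ}
    (h : ∫ x in a..b, f x ≠ 0) : ∃ x ∈ uIcc a b, f x ≠ 0 := by
  by_contra! hf
  exact h (by simp [integral_congr (g := fun _ => (0 : ℝ)) hf])

theorem eigenfunction_rank_one_general (m : ℝ) (hm : 0 < m)
    (γ γ' μ : ℝ → ℝ)
    (hγd : ∀ s ∈ Icc (0:ℝ) m, HasDerivWithinAt γ (γ' s) (Icc 0 m) s)
    (hγ'c : ContinuousOn γ' (Icc 0 m))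
    (hγpos : ∀ s ∈ Icc (0:ℝ) m, 0 < γ s)
    (hμc : ContinuousOn μ (Icc 0 m))
    (ε : ℝ) (hε : 0 < ε) (lam : ℝ)
    (hchar : ε * (∫ s in (0:ℝ)..m,
      Real.exp (-∫ σ in (0:ℝ)..s, (lam + γ' σ + μ σ) / γ σ) *
      ∫ y in (0:ℝ)..s, (1 / γ y) *
        Real.exp (∫ σ in (0:ℝ)..y, (lam + γ' σ + μ σ) / γ σ)) = 1)
    (u : ℝ → ℝ)
    (hu : ∀ s, u s = ε * Real.exp (-∫ σ in (0:ℝ)..s, (lam + γ' σ + μ σ) / γ σ) *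
      ∫ y in (0:ℝ)..s, (1 / γ y) *
        Real.exp (∫ σ in (0:ℝ)..y, (lam + γ' σ + μ σ) / γ σ)) :
    ∃ u' : ℝ → ℝ, ContinuousOn u' (Icc 0 m) ∧
      (∀ s ∈ Icc (0:ℝ) m, HasDerivWithinAt u (u' s) (Icc 0 m) s) ∧
      (∀ s ∈ Icc (0:ℝ) m, 0 ≤ u s) ∧
      (∃ s ∈ Icc (0:ℝ) m, u s ≠ 0) ∧
      u 0 = 0 ∧
      (∫ s in (0:ℝ)..m, u s) = 1 ∧
      (∀ s ∈ Icc (0:ℝ) m,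
        -(γ' s * u s + γ s * u' s) - μ s * u s + ε * ∫ y in (0:ℝ)..m, u y
          = lam * u s) := by
  have hγ0 : ∀ s ∈ Icc (0:ℝ) m, γ s ≠ 0 := fun s hs => (hγpos s hs).ne'
  have hγc : ContinuousOn γ (Icc 0 m) := fun s hs => (hγd s hs).continuousWithinAt
  have hf : ContinuousOn (fun σ => (lam + γ' σ + μ σ) / γ σ) (Icc 0 m) :=
    ((continuousOn_const.add hγ'c).add hμc).div hγc hγ0
  have hderiv : ∀ s ∈ Icc (0:ℝ) m, HasDerivWithinAt u
      (-((lam + γ' s + μ s) / γ s) * u s + ε / γ s) (Icc 0 m) s := by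
    intro s hs
    have h := (hasDerivWithinAt_exp_neg_mul_integral_mul_exp
      (fun _ => hf.hasDerivWithinAt_integral_Icc)
      (g := fun y => 1 / γ y) (continuousOn_const.div hγc hγ0)
      hs).const_mul ε
    simp only [funext hu, mul_assoc]
    exact h.congr_deriv (by ring)
  have hint : ∫ s in (0:ℝ)..m, u s = 1 := by
    simpa only [hu, mul_assoc, intervalIntegral.integral_const_mul] using hchar
  have hucont : ContinuousOn u (Icc 0 m) := fun s hs => (hderiv s hs).continuousWithinAt
  refine ⟨fun s => -((lam + γ' s + μ s) / γ s) * u s + ε / γ s,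
    (hf.neg.mul hucont).add (continuousOn_const.div hγc hγ0), hderiv,
    fun s hs => ?_, ?_, by simp [hu], hint, fun s hs => ?_⟩
  · rw [hu]
    refine mul_nonneg (by positivity) (integral_nonneg hs.1 fun y hy => ?_)
    have := hγpos y ⟨hy.1, hy.2.trans hs.2⟩
    positivity
  · have := exists_mem_uIcc_ne_zero_of_intervalIntegral_ne_zero (hint ▸ one_ne_zero)
    rwa [uIcc_of_le hm.le] at this
  · rw [hint]
    field_simp [hγ0 s hs]
    ring

/-- If `λ` solves the characteristic equation of the rank-one perturbed transport
operator, then the explicit formula gives a nonnegative nontrivial eigenfunction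
`u` with eigenvalue `λ`, normalised by `∫_0^m u = 1`. -/
theorem eigenfunction_rank_one (m : ℝ) (hm : 0 < m)
    (γ γ' μ : ℝ → ℝ)
    (hγd : ∀ s ∈ Icc (0:ℝ) m, HasDerivWithinAt γ (γ' s) (Icc 0 m) s)
    (hγ'c : ContinuousOn γ' (Icc 0 m))
    (hγpos : ∀ s ∈ Icc (0:ℝ) m, 0 < γ s)
    (hμc : ContinuousOn μ (Icc 0 m)) (hμnn : ∀ s ∈ Icc (0:ℝ) m, 0 ≤ μ s)
    (ε : ℝ) (hε : 0 < ε) (lam : ℝ)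
    (hchar : ε * (∫ s in (0:ℝ)..m,
      Real.exp (-∫ σ in (0:ℝ)..s, (lam + γ' σ + μ σ) / γ σ) *
      ∫ y in (0:ℝ)..s, (1 / γ y) *
        Real.exp (∫ σ in (0:ℝ)..y, (lam + γ' σ + μ σ) / γ σ)) = 1)
    (u : ℝ → ℝ)
    (hu : ∀ s, u s = ε * Real.exp (-∫ σ in (0:ℝ)..s, (lam + γ' σ + μ σ) / γ σ) *
      ∫ y in (0:ℝ)..s, (1 / γ y) *
        Real.exp (∫ σ in (0:ℝ)..y, (lam + γ' σ + μ σ) / γ σ)) :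
    ∃ u' : ℝ → ℝ, ContinuousOn u' (Icc 0 m) ∧
      (∀ s ∈ Icc (0:ℝ) m, HasDerivWithinAt u (u' s) (Icc 0 m) s) ∧
      (∀ s ∈ Icc (0:ℝ) m, 0 ≤ u s) ∧
      (∃ s ∈ Icc (0:ℝ) m, u s ≠ 0) ∧
      u 0 = 0 ∧
      (∫ s in (0:ℝ)..m, u s) = 1 ∧
      (∀ s ∈ Icc (0:ℝ) m,
        -(γ' s * u s + γ s * u' s) - μ s * u s + ε * ∫ y in (0:ℝ)..m, u y
          = lam * u s) :=
  eigenfunction_rank_one_general m hm γ γ' μ hγd hγ'c hγpos hμc ε hε lam hchar u hu
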